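/- Let f : [0,∞) → [0,∞) be a probability density that is continuous on [0,∞) and strictly decreasing on (0,∞), with f(0) < ∞. Then for every natural number k, the probability p_k := ∫_0^∞ f(w)·b_k(w) dw that the k-th fractional bit equals 1 satisfies p_k < 1/2 (strictly). -/

import Mathlib

open MeasureTheory Filter Set

/-- The `k`-th fractional-bit indicator: `fracBit k w = 1` iff the remainder of `w`
modulo `2^(-k)` lies in `[2^(-k-1), 2^(-k))`, equivalently iff the fractional part
of `w * 2^k` lies in `[1/2, 1)`. -/
noncomputable def fracBit (k : ℕ) (w : ℝ) : ℝ :=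
  if 1 / 2 ≤ Int.fract (w * 2 ^ k) then 1 else 0


lemma fracBit_nonneg (k : ℕ) (w : ℝ) : 0 ≤ fracBit k w := by
  unfold fracBit; split <;> norm_num

lemma fracBit_le_one (k : ℕ) (w : ℝ) : fracBit k w ≤ 1 := by
  unfold fracBit; split <;> norm_num

lemma measurable_fracBit (k : ℕ) : Measurable (fracBit k) := by
  unfold fracBit
  exact Measurable.ite
    (measurableSet_le measurable_const (measurable_id.mul_const _).fract)
    measurable_const measurable_const

lemma fract_half_flip (x : ℝ) :
    Int.fract (x + 1/2) =
      if Int.fract x < 1/2 then Int.fract x + 1/2 else Int.fract x - 1/2 := by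
  have h0 := Int.fract_nonneg x
  have h1 := Int.fract_lt_one x
  have hx : x + 1/2 = (⌊x⌋ : ℝ) + (Int.fract x + 1/2) := by
    rw [Int.fract]; ring
  rw [hx, Int.fract_intCast_add]
  split
  · next h =>
    exact Int.fract_eq_self.2 ⟨by linarith, by linarith⟩
  · next h =>
    push_neg at h
    have : Int.fract x + 1/2 = (Int.fract x - 1/2) + 1 := by ring
    rw [this, Int.fract_add_one, Int.fract_eq_self.2 ⟨by linarith, by linarith⟩]

lemma fracBit_add_half (k : ℕ) (w : ℝ) :
    fracBit k (w + (2 * 2 ^ k : ℝ)⁻¹) = 1 - fracBit k w := by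
  have h2 : (0:ℝ) < 2 ^ k := by positivity
  have hmul : (w + (2 * 2 ^ k : ℝ)⁻¹) * 2 ^ k = w * 2 ^ k + 1/2 := by
    field_simp
  unfold fracBit
  rw [hmul, fract_half_flip]
  have h0 := Int.fract_nonneg (w * 2 ^ k)
  have h1 := Int.fract_lt_one (w * 2 ^ k)
  by_cases h : Int.fract (w * 2 ^ k) < 1/2
  · rw [if_pos h, if_pos (by linarith), if_neg (by linarith)]; norm_num
  · rw [if_neg h, if_neg (by linarith [not_lt.1 h]), if_pos (not_lt.1 h)]; norm_num

lemma fracBit_eq_zero (k : ℕ) {w : ℝ} (h0 : 0 ≤ w) (h1 : w < (2 * 2 ^ k : ℝ)⁻¹) :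
    fracBit k w = 0 := by
  have h2 : (0:ℝ) < 2 ^ k := by positivity
  have heq : (2 * 2 ^ k : ℝ)⁻¹ * 2 ^ k = 1/2 := by field_simp
  have hlt : w * 2 ^ k < 1/2 := by
    calc w * 2 ^ k < (2 * 2 ^ k : ℝ)⁻¹ * 2 ^ k := by
          exact mul_lt_mul_of_pos_right h1 h2
      _ = 1/2 := heq
  have hfr : Int.fract (w * 2 ^ k) = w * 2 ^ k :=
    Int.fract_eq_self.2 ⟨by positivity, by linarith⟩
  unfold fracBit
  rw [hfr, if_neg (by linarith)]

/-- For a probability density `f` on `[0,∞)` that is continuous on `[0,∞)` and strictly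
decreasing on `(0,∞)`, the probability that the `k`-th fractional bit equals 1 is
strictly less than `1/2`. -/
theorem fractional_bit_prob_lt_half
    (f : ℝ → ℝ)
    (hf_nonneg : ∀ w ∈ Set.Ici (0 : ℝ), 0 ≤ f w)
    (hf_cont : ContinuousOn f (Set.Ici (0 : ℝ)))
    (hf_anti : StrictAntiOn f (Set.Ioi (0 : ℝ)))
    (hf_int : IntegrableOn f (Set.Ici (0 : ℝ)))
    (hf_density : ∫ w in Set.Ici (0 : ℝ), f w = 1)
    (k : ℕ) :
    (∫ w in Set.Ici (0 : ℝ), f w * fracBit k w) < 1 / 2 := by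
  set c : ℝ := (2 * 2 ^ k : ℝ)⁻¹ with hcdef
  have hc : 0 < c := by positivity
  have hmb : Measurable (fracBit k) := measurable_fracBit k
  have hb_bdd : ∀ x, ‖fracBit k x‖ ≤ 1 := fun x => by
    rw [Real.norm_eq_abs, abs_of_nonneg (fracBit_nonneg k x)]; exact fracBit_le_one k x
  -- integrability of the shifted density
  have int_fc : IntegrableOn (fun u => f (u + c)) (Set.Ici (0:ℝ)) := by
    have hemb := (MeasurableEquiv.addRight c).measurableEmbedding
    have hiff := (measurePreserving_add_right volume c).integrableOn_comp_preimage hemb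
      (f := f) (s := Set.Ici c)
    have hpre : (fun x : ℝ => x + c) ⁻¹' Set.Ici c = Set.Ici (0:ℝ) := by
      ext x; simp
    have : IntegrableOn f (Set.Ici c) := hf_int.mono_set (Set.Ici_subset_Ici.2 hc.le)
    have h2 := hiff.2 this
    rwa [hpre] at h2
  -- products with bounded measurable factors are integrable
  have int_fb : IntegrableOn (fun w => f w * fracBit k w) (Set.Ici (0:ℝ)) := by
    have := hf_int.bdd_mul hmb.aestronglyMeasurable (Filter.Eventually.of_forall hb_bdd)
    simpa [mul_comm, IntegrableOn] using this
  have int_fcb : IntegrableOn (fun w => f (w + c) * fracBit k w) (Set.Ici (0:ℝ)) := by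
    have := int_fc.bdd_mul hmb.aestronglyMeasurable (Filter.Eventually.of_forall hb_bdd)
    simpa [mul_comm, IntegrableOn] using this
  -- change of variables : shift by c
  have key : (∫ w in Set.Ici (0:ℝ), f w * fracBit k w)
      = ∫ u in Set.Ici (-c), f (u + c) * fracBit k (u + c) := by
    have hemb := (MeasurableEquiv.addRight c).measurableEmbedding
    have h := (measurePreserving_add_right volume c).setIntegral_preimage_emb hemb
      (fun w => f w * fracBit k w) (Set.Ici 0)
    have hpre : (fun x : ℝ => x + c) ⁻¹' Set.Ici 0 = Set.Ici (-c) := by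
      ext x; simp [neg_le, le_add_iff_nonneg_left]
    rw [hpre] at h
    exact h.symm
  -- drop the part below 0, where the integrand vanishes
  have key2 : (∫ u in Set.Ici (-c), f (u + c) * fracBit k (u + c))
      = ∫ u in Set.Ici (0:ℝ), f (u + c) * fracBit k (u + c) := by
    refine setIntegral_eq_of_subset_of_forall_diff_eq_zero measurableSet_Ici
      (Set.Ici_subset_Ici.2 (by linarith)) ?_
    intro x hx
    simp only [Set.mem_diff, Set.mem_Ici, not_le] at hx
    have h0 : 0 ≤ x + c := by linarith [hx.1]
    have h1 : x + c < c := by linarith [hx.2]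
    rw [fracBit_eq_zero k h0 h1, mul_zero]
  -- flip the bit
  have key3 : (∫ u in Set.Ici (0:ℝ), f (u + c) * fracBit k (u + c))
      = ∫ u in Set.Ici (0:ℝ), f (u + c) * (1 - fracBit k u) := by
    refine setIntegral_congr_fun measurableSet_Ici fun u _ => ?_
    rw [fracBit_add_half]
  -- f c ≤ f 0
  have hfc0 : f c ≤ f 0 := by
    have htend : Tendsto f (nhdsWithin 0 (Set.Ioi 0)) (nhds (f 0)) :=
      (hf_cont 0 Set.self_mem_Ici).tendsto.mono_left (nhdsWithin_mono 0 Set.Ioi_subset_Ici_self)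
    refine ge_of_tendsto htend ?_
    filter_upwards [Ioo_mem_nhdsGT_of_mem (by constructor <;> simp [hc] : (0:ℝ) ∈ Set.Ico 0 c)]
      with x hx
    exact (hf_anti hx.1 (by simpa using hc) hx.2).le
  have hdiff_nonneg : ∀ u ∈ Set.Ici (0:ℝ), 0 ≤ f u - f (u + c) := by
    intro u hu
    rcases eq_or_lt_of_le (Set.mem_Ici.1 hu : (0:ℝ) ≤ u) with h | h
    · simp only [← h, zero_add]; linarith
    · have := hf_anti h (by simp; linarith : u + c ∈ Set.Ioi (0:ℝ)) (by linarith)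
      linarith
  -- integrand nonneg
  have hnonneg : ∀ u ∈ Set.Ici (0:ℝ), 0 ≤ (f u - f (u + c)) * (1 - fracBit k u) := by
    intro u hu
    have h1 := fracBit_le_one k u
    exact mul_nonneg (hdiff_nonneg u hu) (by linarith)
  have int_diff : IntegrableOn (fun u => (f u - f (u + c)) * (1 - fracBit k u))
      (Set.Ici (0:ℝ)) := by
    have : (fun u => (f u - f (u + c)) * (1 - fracBit k u))
        = fun u => (f u - f u * fracBit k u) - (f (u + c) - f (u + c) * fracBit k u) := by
      funext u; ring
    rw [this]
    exact ((hf_int.sub int_fb).sub (int_fc.sub int_fcb))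
  -- strict positivity of the difference integral
  have hpos : 0 < ∫ u in Set.Ici (0:ℝ), (f u - f (u + c)) * (1 - fracBit k u) := by
    have hsub : (∫ u in Set.Ioo (0:ℝ) c, (f u - f (u + c)) * (1 - fracBit k u))
        ≤ ∫ u in Set.Ici (0:ℝ), (f u - f (u + c)) * (1 - fracBit k u) := by
      refine setIntegral_mono_set int_diff ?_ ?_
      · rw [EventuallyLE, ae_restrict_iff' measurableSet_Ici]
        exact Filter.Eventually.of_forall hnonneg
      · exact HasSubset.Subset.eventuallyLE (fun x hx => le_of_lt hx.1)
    have heqz : (∫ u in Set.Ioo (0:ℝ) c, (f u - f (u + c)) * (1 - fracBit k u))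
        = ∫ u in Set.Ioo (0:ℝ) c, (f u - f (u + c)) := by
      refine setIntegral_congr_fun measurableSet_Ioo fun u hu => ?_
      rw [fracBit_eq_zero k hu.1.le hu.2]; ring
    have hIoo : 0 < ∫ u in Set.Ioo (0:ℝ) c, (f u - f (u + c)) := by
      have hcont1 : ContinuousOn (fun u => f u - f (u + c)) (Set.Icc 0 c) := by
        apply ContinuousOn.sub
        · exact hf_cont.mono (fun x hx => hx.1)
        · refine ContinuousOn.comp hf_cont (by fun_prop) ?_
          intro x hx; exact add_nonneg hx.1 hc.le
      have hii : IntervalIntegrable (fun u => f u - f (u + c)) volume 0 c := by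
        apply ContinuousOn.intervalIntegrable
        rwa [Set.uIcc_of_le hc.le]
      have := intervalIntegral.intervalIntegral_pos_of_pos_on hii
        (fun x hx => by
          have := hf_anti hx.1 (by simp; linarith [hx.1] : x + c ∈ Set.Ioi (0:ℝ)) (by linarith)
          simpa using sub_pos.2 this) hc
      rwa [intervalIntegral.integral_of_le hc.le, integral_Ioc_eq_integral_Ioo] at this
    calc (0:ℝ) < ∫ u in Set.Ioo (0:ℝ) c, (f u - f (u + c)) := hIoo
      _ = _ := heqz.symm
      _ ≤ _ := hsub
  -- assemble
  have expand : (∫ u in Set.Ici (0:ℝ), (f u - f (u + c)) * (1 - fracBit k u))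
      = (1 - (∫ w in Set.Ici (0:ℝ), f w * fracBit k w))
        - ((∫ w in Set.Ici (0:ℝ), f w * fracBit k w)) := by
    have e1 : (fun u => (f u - f (u + c)) * (1 - fracBit k u))
        = fun u => (f u - f u * fracBit k u) - (f (u + c) - f (u + c) * fracBit k u) := by
      funext u; ring
    have i2 : (∫ w in Set.Ici (0:ℝ), f w * fracBit k w)
        = ∫ u in Set.Ici (0:ℝ), (f (u + c) - f (u + c) * fracBit k u) := by
      rw [key, key2, key3]
      refine setIntegral_congr_fun measurableSet_Ici fun u _ => ?_
      ring
    have iA : IntegrableOn (fun u => f u - f u * fracBit k u) (Set.Ici (0:ℝ)) := by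
      exact hf_int.sub int_fb
    have iB : IntegrableOn (fun u => f (u + c) - f (u + c) * fracBit k u) (Set.Ici (0:ℝ)) := by
      exact int_fc.sub int_fcb
    rw [e1, integral_sub iA iB, integral_sub hf_int int_fb, hf_density, ← i2]
  rw [expand] at hpos
  linarith
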